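/- Assume that Ω^1_{R/K} is a free R-module with basis dx^1,…,dx^d. For g ∈ R write Ĩ(g) := Σ_i ι(g_i) t^i ∈ R^coord[[t^1,…,t^d]], and let J be the d×d matrix over R^coord[[t^1,…,t^d]] with entries J^a_b := ∂_{t^b} Ĩ(x^a). Then: (i) J is an invertible matrix over R^coord[[t^1,…,t^d]]; and (ii) its inverse satisfies, for every f ∈ R and every a ∈ {1,…,d}: Σ_{b=1}^d (J^{-1})^b_a · ∂_{t^b} Ĩ(f) = Ĩ(∂_{x^a} f). -/

import Mathlib

/-! Since `∂_{t^c}` is a derivation of `R^coord[[t]]` and `Ĩ` a `K`-algebra map, `∂_{t^c} ∘ Ĩ` is a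
`K`-derivation of `R`; by the universal property of `Ω¹_{R/K}` it obeys the chain rule
`∂_{t^c} Ĩ(f) = Σ_a Ĩ(∂_{x^a} f) J^a_c`. The constant term of `J` is the image of the matrix
`(x^a_{(c)})`, whose determinant is inverted in `R^coord`, so `J` is invertible, and multiplying
the chain rule by `J⁻¹` gives the formula. -/

namespace Paper

/-- Multi-indices: finitely supported functions `Fin d → ℕ`. -/
abbrev MIdx (d : ℕ) := Fin d →₀ ℕ

/-- The length `|i|` of a multi-index. -/
def deg {d : ℕ} (i : MIdx d) : ℕ := i.sum fun _ n => n

variable (K R : Type) [Field K] [CharZero K] [CommRing R] [Algebra K R]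

/-- The defining relations of the algebra `R^𝐝`. -/
def relSet (d : ℕ) : Set (MvPolynomial (R × MIdx d) R) :=
  {p | (∃ f g : R, ∃ i : MIdx d,
          p = MvPolynomial.X (f + g, i) - MvPolynomial.X (f, i) - MvPolynomial.X (g, i)) ∨
       (∃ f g : R, ∃ i : MIdx d,
          p = MvPolynomial.X (f * g, i) -
            ∑ q ∈ Finset.HasAntidiagonal.antidiagonal i, MvPolynomial.X (f, q.1) * MvPolynomial.X (g, q.2)) ∨
       (∃ f : R, p = MvPolynomial.X (f, (0 : MIdx d)) - MvPolynomial.C f) ∨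
       (∃ (c : K) (i : MIdx d), 1 ≤ deg i ∧ p = MvPolynomial.X (algebraMap K R c, i))}

/-- The commutative `R`-algebra `R^𝐝` generated by the symbols `f_i`. -/
def Rd (d : ℕ) : Type :=
  MvPolynomial (R × MIdx d) R ⧸ Ideal.span (relSet K R d)

noncomputable instance (d : ℕ) : CommRing (Rd K R d) := Ideal.Quotient.commRing _
noncomputable instance (d : ℕ) : Algebra R (Rd K R d) := Ideal.Quotient.algebra R
noncomputable instance (d : ℕ) : Algebra K (Rd K R d) := Ideal.Quotient.algebra K

/-- The generator `f_i` of `R^𝐝`. -/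
noncomputable def gen {d : ℕ} (f : R) (i : MIdx d) : Rd K R d :=
  Ideal.Quotient.mk (Ideal.span (relSet K R d)) (MvPolynomial.X (f, i))

/-- The Taylor series `I(f) = Σ_i f_i t^i ∈ R^𝐝[[t^1,…,t^d]]`. -/
noncomputable def Ifun {d : ℕ} (f : R) : MvPowerSeries (Fin d) (Rd K R d) :=
  fun i => gen K R f i

end Paper

namespace Paper

variable (K R : Type) [Field K] [CharZero K] [CommRing R] [Algebra K R]

lemma deg_single {d : ℕ} (c : Fin d) : deg (Finsupp.single c (1 : ℕ)) = 1 := by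
  simp [deg]

/-- The determinant `det(x^a_{(b)}) ∈ R^𝐝`. -/
noncomputable def detX (d : ℕ) (x : Fin d → R) : Rd K R d :=
  Matrix.det (Matrix.of fun a c => gen K R (x a) (Finsupp.single c 1))

/-- `R^coord`: the localization of `R^𝐝` at `det(x^a_{(b)})`. -/
abbrev Rcoord (d : ℕ) (x : Fin d → R) : Type :=
  Localization.Away (detX K R d x)

/-- The localization map `ι : R^𝐝 → R^coord`. -/
noncomputable def locMap (d : ℕ) (x : Fin d → R) : Rd K R d →+* Rcoord K R d x :=
  algebraMap _ _

end Paper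

namespace Paper

/-- The formal partial derivative `∂_{t^c}` on multivariate power series,
defined coefficientwise. -/
noncomputable def ptderiv {A : Type} [CommRing A] {d : ℕ} (c : Fin d)
    (F : MvPowerSeries (Fin d) A) : MvPowerSeries (Fin d) A :=
  fun k => (k c + 1 : ℕ) • MvPowerSeries.coeff (k + Finsupp.single c 1) F

variable (K R : Type) [Field K] [CharZero K] [CommRing R] [Algebra K R]

/-- The series `Ĩ(g) = Σ_i ι(g_i) t^i` over `R^coord`. -/
noncomputable def Itilde (d : ℕ) (x : Fin d → R) (g : R) :
    MvPowerSeries (Fin d) (Rcoord K R d x) :=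
  fun i => locMap K R d x (gen K R g i)

/-- The Jacobian matrix `J = (∂_{t^b} Ĩ(x^a))` over `R^coord[[t]]`. -/
noncomputable def Jmat (d : ℕ) (x : Fin d → R) :
    Matrix (Fin d) (Fin d) (MvPowerSeries (Fin d) (Rcoord K R d x)) :=
  Matrix.of fun a c => ptderiv c (Itilde K R d x (x a))

end Paper

theorem Derivation.apply_eq_sum_smul_of_D_eq {K R M ι : Type*} [CommRing K] [CommRing R]
    [Algebra K R] [AddCommGroup M] [Module R M] [Module K M] [IsScalarTower K R M] [Fintype ι]
    (D : Derivation K R M) {f : R} {x c : ι → R}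
    (h : KaehlerDifferential.D K R f = ∑ a, c a • KaehlerDifferential.D K R (x a)) :
    D f = ∑ a, c a • D (x a) := by
  simpa using congrArg D.liftKaehlerDifferential h

theorem Derivation.apply_algHom_eq_sum_mul_of_D_eq {K R S ι : Type*} [CommRing K] [CommRing R]
    [CommRing S] [Algebra K R] [Algebra K S] [Fintype ι] (δ : Derivation K S S) (φ : R →ₐ[K] S)
    {f : R} {x c : ι → R}
    (h : KaehlerDifferential.D K R f = ∑ a, c a • KaehlerDifferential.D K R (x a)) :
    δ (φ f) = ∑ a, φ (c a) * δ (φ (x a)) := by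
  let := φ.toRingHom.toAlgebra
  have : IsScalarTower K R S := IsScalarTower.of_algebraMap_eq' φ.comp_algebraMap.symm
  exact (δ.compAlgebraMap R).apply_eq_sum_smul_of_D_eq h

theorem Matrix.sum_inv_apply_mul_eq_of_eq_sum_mul {α n : Type*} [CommRing α] [Fintype n]
    [DecidableEq n] {J : Matrix n n α} (hJ : IsUnit J) {v w : n → α}
    (h : ∀ c, v c = ∑ b, w b * J b c) (a : n) :
    ∑ c, J⁻¹ c a * v c = w a := by
  have hv : v = Matrix.vecMul w J := funext h
  have hinv : J * J⁻¹ = 1 := J.mul_nonsing_inv ((J.isUnit_iff_isUnit_det).1 hJ)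
  calc ∑ c, J⁻¹ c a * v c = Matrix.vecMul v J⁻¹ a := by simp only [vecMul, dotProduct, mul_comm]
    _ = w a := by rw [hv, vecMul_vecMul, hinv, vecMul_one]

namespace Paper

open Finset MvPowerSeries

lemma ptderiv_eq_pderiv {A : Type} [CommRing A] {d : ℕ} (c : Fin d)
    (F : MvPowerSeries (Fin d) A) : ptderiv c F = pderiv A c F := by
  ext k
  rw [coeff_pderiv, ← Nat.cast_succ, mul_comm, ← nsmul_eq_mul]
  rfl

lemma constantCoeff_ptderiv {A : Type} [CommRing A] {d : ℕ} (c : Fin d)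
    (F : MvPowerSeries (Fin d) A) :
    constantCoeff (ptderiv c F) = coeff (Finsupp.single c 1) F := by
  rw [← coeff_zero_eq_constantCoeff_apply]
  exact (one_nsmul _).trans (congrArg (coeff · F) (zero_add _))

section Relations

variable (K R : Type) [Field K] [CommRing R] [Algebra K R] {d : ℕ}

lemma mk_eq_zero_of_mem_relSet {p : MvPolynomial (R × MIdx d) R} (hp : p ∈ relSet K R d) :
    Ideal.Quotient.mk (Ideal.span (relSet K R d)) p = 0 :=
  Ideal.Quotient.eq_zero_iff_mem.2 (Ideal.subset_span hp)

lemma gen_add (f g : R) (i : MIdx d) : gen K R (f + g) i = gen K R f i + gen K R g i := by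
  have h := mk_eq_zero_of_mem_relSet K R (Or.inl ⟨f, g, i, rfl⟩)
  rwa [map_sub, map_sub, sub_sub, sub_eq_zero] at h

lemma gen_mul (f g : R) (i : MIdx d) :
    gen K R (f * g) i = ∑ q ∈ antidiagonal i, gen K R f q.1 * gen K R g q.2 := by
  have h := mk_eq_zero_of_mem_relSet K R (d := d) (Or.inr (Or.inl ⟨f, g, i, rfl⟩))
  simp only [map_sub, map_sum, map_mul, sub_eq_zero] at h
  exact h

lemma gen_zero (f : R) : gen K R f (0 : MIdx d) = algebraMap R (Rd K R d) f := by
  have h := mk_eq_zero_of_mem_relSet K R (d := d) (Or.inr (Or.inr (Or.inl ⟨f, rfl⟩)))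
  rwa [map_sub, sub_eq_zero] at h

lemma gen_algebraMap_of_ne_zero (c : K) {i : MIdx d} (hi : i ≠ 0) :
    gen K R (algebraMap K R c) i = 0 := by
  refine mk_eq_zero_of_mem_relSet K R (Or.inr (Or.inr (Or.inr ⟨c, i, ?_, rfl⟩)))
  exact Nat.one_le_iff_ne_zero.2 fun h => hi ((Finsupp.degree_eq_zero_iff i).1 h)

lemma algebraMap_algebraMap_Rd (c : K) :
    algebraMap R (Rd K R d) (algebraMap K R c) = algebraMap K (Rd K R d) c := by
  show Ideal.Quotient.mk _ (algebraMap R (MvPolynomial (R × MIdx d) R) (algebraMap K R c))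
      = Ideal.Quotient.mk _ (algebraMap K (MvPolynomial (R × MIdx d) R) c)
  rw [IsScalarTower.algebraMap_apply K R (MvPolynomial (R × MIdx d) R)]

end Relations

section Taylor

variable (K R : Type) [Field K] [CommRing R] [Algebra K R] (d : ℕ)

lemma Ifun_add (f g : R) :
    Ifun K R (f + g) = (Ifun K R f + Ifun K R g : MvPowerSeries (Fin d) _) :=
  funext (gen_add K R f g)

lemma Ifun_mul (f g : R) :
    Ifun K R (f * g) = (Ifun K R f * Ifun K R g : MvPowerSeries (Fin d) _) := by
  ext i
  rw [coeff_mul]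
  exact gen_mul K R f g i

lemma Ifun_algebraMap (c : K) :
    (Ifun K R (algebraMap K R c) : MvPowerSeries (Fin d) _) = algebraMap K _ c := by
  ext i
  rw [MvPowerSeries.algebraMap_apply, coeff_C]
  split_ifs with hi
  · subst hi
    exact (gen_zero K R _).trans (algebraMap_algebraMap_Rd K R c)
  · exact gen_algebraMap_of_ne_zero K R c hi

noncomputable def IfunAlgHom : R →ₐ[K] MvPowerSeries (Fin d) (Rd K R d) where
  toFun := Ifun K R
  map_add' := Ifun_add K R d
  map_mul' := Ifun_mul K R d
  map_zero' := by simpa using Ifun_add K R d 0 0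
  map_one' := by simpa using Ifun_algebraMap K R d 1
  commutes' := Ifun_algebraMap K R d

variable (x : Fin d → R)

noncomputable def ItildeAlgHom : R →ₐ[K] MvPowerSeries (Fin d) (Rcoord K R d x) :=
  (mapAlgHom (IsScalarTower.toAlgHom K (Rd K R d) (Rcoord K R d x))).comp (IfunAlgHom K R d)

lemma ItildeAlgHom_apply (g : R) : ItildeAlgHom K R d x g = Itilde K R d x g := rfl

lemma ptderiv_Itilde {f : R} {p : Fin d → R}
    (hf : KaehlerDifferential.D K R f = ∑ a, p a • KaehlerDifferential.D K R (x a)) (c : Fin d) :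
    ptderiv c (Itilde K R d x f)
      = ∑ a, Itilde K R d x (p a) * ptderiv c (Itilde K R d x (x a)) := by
  simp only [ptderiv_eq_pderiv, ← ItildeAlgHom_apply]
  exact ((pderiv (Rcoord K R d x) c).restrictScalars K).apply_algHom_eq_sum_mul_of_D_eq
    (ItildeAlgHom K R d x) hf

end Taylor

section Jacobian

variable (K R : Type) [Field K] [CommRing R] [Algebra K R] (d : ℕ) (x : Fin d → R)

lemma Jmat_map_constantCoeff :
    (Jmat K R d x).map constantCoeff
      = (Matrix.of fun a c => gen K R (x a) (Finsupp.single c 1)).map (locMap K R d x) := by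
  ext a c
  exact constantCoeff_ptderiv c _

lemma isUnit_Jmat : IsUnit (Jmat K R d x) := by
  rw [Matrix.isUnit_iff_isUnit_det, isUnit_iff_constantCoeff, RingHom.map_det,
    RingHom.mapMatrix_apply, Jmat_map_constantCoeff, ← RingHom.mapMatrix_apply, ← RingHom.map_det]
  exact IsLocalization.Away.algebraMap_isUnit (detX K R d x)

end Jacobian

end Paper

theorem statement11_general (K R : Type) [Field K] [CommRing R] [Algebra K R]
    (d : ℕ) (x : Fin d → R)
    (pd : Fin d → R → R)
    (hpd : ∀ g : R, KaehlerDifferential.D K R g =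
      ∑ a : Fin d, pd a g • KaehlerDifferential.D K R (x a)) :
    IsUnit (Paper.Jmat K R d x) ∧
    ∀ (f : R) (a : Fin d),
      ∑ c : Fin d,
        (Paper.Jmat K R d x)⁻¹ c a * Paper.ptderiv c (Paper.Itilde K R d x f) =
        Paper.Itilde K R d x (pd a f) :=
  ⟨Paper.isUnit_Jmat K R d x, fun f =>
    Matrix.sum_inv_apply_mul_eq_of_eq_sum_mul (Paper.isUnit_Jmat K R d x)
      fun c => Paper.ptderiv_Itilde K R d x (hpd f) c⟩

/-- The Jacobian matrix `J = (∂_{t^b} Ĩ(x^a))` is invertible over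
`R^coord[[t]]` and its inverse satisfies
`Σ_b (J⁻¹)^b_a ∂_{t^b} Ĩ(f) = Ĩ(∂_{x^a} f)`. -/
theorem statement11 (K R : Type) [Field K] [CharZero K] [CommRing R] [Algebra K R]
    (d : ℕ) (hd : 1 ≤ d) (x : Fin d → R)
    (b : Module.Basis (Fin d) R (KaehlerDifferential K R))
    (hb : ∀ a : Fin d, b a = KaehlerDifferential.D K R (x a))
    (pd : Fin d → R → R)
    (hpd : ∀ g : R, KaehlerDifferential.D K R g =
      ∑ a : Fin d, pd a g • KaehlerDifferential.D K R (x a)) :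
    IsUnit (Paper.Jmat K R d x) ∧
    ∀ (f : R) (a : Fin d),
      ∑ c : Fin d,
        (Paper.Jmat K R d x)⁻¹ c a * Paper.ptderiv c (Paper.Itilde K R d x f) =
        Paper.Itilde K R d x (pd a f) :=
  statement11_general K R d x pd hpd
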